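/- arXiv:2404.09888 — 4 statements merged into one kernel-verified Lean document; each statement's English description precedes it below -/
import Mathlib

section
/- Under the hypotheses of the previous statement (potential function μ certifying the partition constraints), the maximum flow value from S to T in the subgraph obtained by deleting all cut edges and all edges incident to I (the 'bypass network') is zero. -/
/-!
Read the flow against the potential `μ`. Along every edge of the bypass network `μ` does not
decrease (these are the uncut edges, `d = 0`), so the `μ`-weighted outflow of the sources is at
most the `μ`-weighted inflow of the sinks. Since every source sits strictly above every sink in
potential, the sum over pairs `(s, t)` of `outflow s * inflow t * (μ s - μ t)` is termwise
nonnegative yet equals the flow value times a nonpositive number; so every product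
`outflow s * inflow t` vanishes, and these products add up to the square of the flow value.
-/

open Finset

namespace FlowPotential

variable {V : Type*} [Fintype V]

def inflow (f : V × V → ℝ) (v : V) : ℝ := ∑ u, f (u, v)

def outflow (f : V × V → ℝ) (v : V) : ℝ := ∑ u, f (v, u)

theorem sum_mul_inflow_sub_outflow (f : V × V → ℝ) (g : V → ℝ) :
    ∑ v, g v * (inflow f v - outflow f v) = ∑ u, ∑ v, f (u, v) * (g v - g u) := by
  simp only [inflow, outflow, mul_sub, mul_sum, sum_sub_distrib]
  rw [sum_comm (f := fun v u => g v * f (u, v))]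
  congr 1 <;> exact sum_congr rfl fun _ _ => sum_congr rfl fun _ _ => by ring

variable {S T : Finset V} {f : V × V → ℝ}

theorem sum_mul_inflow_sub_outflow_eq (g : V → ℝ)
    (hcons : ∀ v, v ∉ S → v ∉ T → inflow f v = outflow f v)
    (hnosrc : ∀ u v, v ∈ S → f (u, v) = 0)
    (hnosink : ∀ u v, u ∈ T → f (u, v) = 0) :
    ∑ v, g v * (inflow f v - outflow f v) =
      ∑ t ∈ T, g t * inflow f t - ∑ s ∈ S, g s * outflow f s := by
  classical
  have hvertex : ∀ v, g v * (inflow f v - outflow f v) =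
      (if v ∈ T then g v * inflow f v else 0) - (if v ∈ S then g v * outflow f v else 0) := by
    intro v
    have hin : v ∈ S → inflow f v = 0 := fun hv => sum_eq_zero fun u _ => hnosrc u v hv
    have hout : v ∈ T → outflow f v = 0 := fun hv => sum_eq_zero fun u _ => hnosink v u hv
    by_cases hS : v ∈ S <;> by_cases hT : v ∈ T <;>
      simp [hS, hT, hin, hout, hcons v]
  simp only [hvertex, sum_sub_distrib, sum_ite_mem, univ_inter]

theorem sum_outflow_eq_sum_inflow
    (hcons : ∀ v, v ∉ S → v ∉ T → inflow f v = outflow f v)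
    (hnosrc : ∀ u v, v ∈ S → f (u, v) = 0)
    (hnosink : ∀ u v, u ∈ T → f (u, v) = 0) :
    ∑ s ∈ S, outflow f s = ∑ t ∈ T, inflow f t := by
  have h := sum_mul_inflow_sub_outflow_eq (fun _ => (1 : ℝ)) hcons hnosrc hnosink
  rw [sum_mul_inflow_sub_outflow] at h
  simp only [sub_self, mul_zero, sum_const_zero, one_mul] at h
  linarith

theorem sum_mul_outflow_le_sum_mul_inflow {g : V → ℝ} (hf : ∀ e, 0 ≤ f e)
    (hg : ∀ u v, f (u, v) ≠ 0 → g u ≤ g v)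
    (hcons : ∀ v, v ∉ S → v ∉ T → inflow f v = outflow f v)
    (hnosrc : ∀ u v, v ∈ S → f (u, v) = 0)
    (hnosink : ∀ u v, u ∈ T → f (u, v) = 0) :
    ∑ s ∈ S, g s * outflow f s ≤ ∑ t ∈ T, g t * inflow f t := by
  have hdiff : 0 ≤ ∑ u, ∑ v, f (u, v) * (g v - g u) :=
    sum_nonneg fun u _ => sum_nonneg fun v _ => by
      by_cases huv : f (u, v) = 0
      · simp [huv]
      · exact mul_nonneg (hf _) (sub_nonneg.mpr (hg u v huv))
  rw [← sum_mul_inflow_sub_outflow, sum_mul_inflow_sub_outflow_eq g hcons hnosrc hnosink] at hdiff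
  linarith

theorem sum_sum_outflow_mul_inflow_mul_sub (g : V → ℝ)
    (hcons : ∀ v, v ∉ S → v ∉ T → inflow f v = outflow f v)
    (hnosrc : ∀ u v, v ∈ S → f (u, v) = 0)
    (hnosink : ∀ u v, u ∈ T → f (u, v) = 0) :
    ∑ s ∈ S, ∑ t ∈ T, outflow f s * inflow f t * (g s - g t) =
      (∑ s ∈ S, outflow f s) * (∑ s ∈ S, g s * outflow f s - ∑ t ∈ T, g t * inflow f t) := by
  rw [mul_sub, mul_comm]
  nth_rw 1 [sum_outflow_eq_sum_inflow hcons hnosrc hnosink]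
  rw [sum_mul_sum, sum_mul_sum, ← sum_sub_distrib]
  refine sum_congr rfl fun s _ => ?_
  rw [← sum_sub_distrib]
  exact sum_congr rfl fun t _ => by ring

theorem sum_outflow_eq_zero_of_potential {g : V → ℝ} (hf : ∀ e, 0 ≤ f e)
    (hg : ∀ u v, f (u, v) ≠ 0 → g u ≤ g v)
    (hsep : ∀ s ∈ S, ∀ t ∈ T, g t < g s)
    (hcons : ∀ v, v ∉ S → v ∉ T → inflow f v = outflow f v)
    (hnosrc : ∀ u v, v ∈ S → f (u, v) = 0)
    (hnosink : ∀ u v, u ∈ T → f (u, v) = 0) :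
    ∑ s ∈ S, outflow f s = 0 := by
  have hvalue := sum_outflow_eq_sum_inflow hcons hnosrc hnosink
  have hout : ∀ v, 0 ≤ outflow f v := fun v => sum_nonneg fun u _ => hf _
  have hin : ∀ v, 0 ≤ inflow f v := fun v => sum_nonneg fun u _ => hf _
  have hterm : ∀ s ∈ S, ∀ t ∈ T, 0 ≤ outflow f s * inflow f t * (g s - g t) :=
    fun s hs t ht => mul_nonneg (mul_nonneg (hout s) (hin t)) (sub_nonneg.mpr (hsep s hs t ht).le)
  have hpair_zero : ∑ s ∈ S, ∑ t ∈ T, outflow f s * inflow f t * (g s - g t) = 0 := by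
    refine le_antisymm ?_ (sum_nonneg fun s hs => sum_nonneg (hterm s hs))
    rw [sum_sum_outflow_mul_inflow_mul_sub g hcons hnosrc hnosink]
    exact mul_nonpos_of_nonneg_of_nonpos (sum_nonneg fun s _ => hout s)
      (sub_nonpos.mpr (sum_mul_outflow_le_sum_mul_inflow hf hg hcons hnosrc hnosink))
  have hproduct : ∀ s ∈ S, ∀ t ∈ T, outflow f s * inflow f t = 0 := by
    intro s hs t ht
    have h := (sum_eq_zero_iff_of_nonneg fun s hs => sum_nonneg (hterm s hs)).mp
      hpair_zero s hs
    have h := (sum_eq_zero_iff_of_nonneg (hterm s hs)).mp h t ht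
    simpa [sub_ne_zero.mpr (hsep s hs t ht).ne'] using h
  have hsq : (∑ s ∈ S, outflow f s) * (∑ s ∈ S, outflow f s) = 0 := by
    nth_rw 2 [hvalue]
    rw [sum_mul_sum]
    exact sum_eq_zero fun s hs => sum_eq_zero fun t ht => hproduct s hs t ht
  exact mul_self_eq_zero.mp hsq

end FlowPotential

theorem stmt_2_general {V : Type*} [Fintype V]
    (E : Set (V × V)) (S T I : Finset V)
    (d : V × V → ℕ)
    (μ : V → ℝ)
    (hST : ∀ s ∈ S, ∀ t ∈ T, μ s - μ t ≥ 1)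
    (hcut : ∀ u v, (u, v) ∈ E → u ∉ I → v ∉ I → (d (u, v) : ℝ) - μ u + μ v ≥ 0)
    (f : V × V → ℝ)
    -- f is supported on the bypass network: edges of E not incident to I and not cut
    (hsupp : ∀ u v, ¬ ((u, v) ∈ E ∧ u ∉ I ∧ v ∉ I ∧ d (u, v) = 0) → f (u, v) = 0)
    (hcap : ∀ e, 0 ≤ f e ∧ f e ≤ 1)
    (hcons : ∀ v, v ∉ S → v ∉ T → ∑ u, f (u, v) = ∑ u, f (v, u))
    (hnosrc : ∀ u v, v ∈ S → f (u, v) = 0)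
    (hnosink : ∀ u v, u ∈ T → f (u, v) = 0) :
    ∑ u ∈ S, ∑ v, f (u, v) = 0 := by
  have hmono : ∀ u v, f (u, v) ≠ 0 → μ u ≤ μ v := by
    intro u v huv
    obtain ⟨hE, hu, hv, hd⟩ := not_not.mp (mt (hsupp u v) huv)
    have := hcut u v hE hu hv
    rw [hd, Nat.cast_zero] at this
    linarith
  exact FlowPotential.sum_outflow_eq_zero_of_potential (fun e => (hcap e).1) hmono
    (fun s hs t ht => by linarith [hST s hs t ht]) hcons hnosrc hnosink

/-- under the partition-certificate hypotheses (potential function μ),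
every flow on the bypass network (the graph with all cut edges and all edges
incident to `I` deleted) has value 0; hence the maximum flow on the bypass
network is zero. -/
theorem stmt_2 {V : Type*} [Fintype V]
    (E : Set (V × V)) (S T I : Finset V)
    (d : V × V → ℕ) (hd : ∀ e, d e ≤ 1)
    (μ : V → ℝ)
    (hμ01 : ∀ x, x ∉ I → 0 ≤ μ x ∧ μ x ≤ 1)
    (hST : ∀ s ∈ S, ∀ t ∈ T, μ s - μ t ≥ 1)
    (hcut : ∀ u v, (u, v) ∈ E → u ∉ I → v ∉ I → (d (u, v) : ℝ) - μ u + μ v ≥ 0)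
    (f : V × V → ℝ)
    -- f is supported on the bypass network: edges of E not incident to I and not cut
    (hsupp : ∀ u v, ¬ ((u, v) ∈ E ∧ u ∉ I ∧ v ∉ I ∧ d (u, v) = 0) → f (u, v) = 0)
    (hcap : ∀ e, 0 ≤ f e ∧ f e ≤ 1)
    (hcons : ∀ v, v ∉ S → v ∉ T → ∑ u, f (u, v) = ∑ u, f (v, u))
    (hnosrc : ∀ u v, v ∈ S → f (u, v) = 0)
    (hnosink : ∀ u v, u ∈ T → f (u, v) = 0) :
    ∑ u ∈ S, ∑ v, f (u, v) = 0 :=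
  stmt_2_general E S T I d μ hST hcut f hsupp hcap hcons hnosrc hnosink
end

section
/- NP-hardness gadget soundness (clause sub-graph): Consider the sub-graph for a 3-SAT clause c over variables x₁,…,xₙ built as in Construction 1, with entry node s_prev, exit node s_next, one node per variable with an incoming edge from s_prev and an outgoing edge to s_next, plus intermediate nodes I_T, I_F bypassing respectively the outgoing edge of each positive literal variable and the incoming edge of each negated literal variable. Given a Boolean assignment, cut the incoming edge of x_i if x_i is false and its outgoing edge if x_i is true. Then there exists a path from s_prev to s_next in the cut sub-graph if and only if the assignment satisfies the clause, and every surviving path passes through I_T or I_F. -/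
/-!
Cutting the through edges according to `σ` splits the variable nodes: the source side
`{sprev} ∪ {xᵢ | σ i = true}` is left only through `iT` or `iF`, so every surviving path
uses one of them. If moreover the clause is falsified, the source side together with `iF` has
no outgoing edges at all: `xᵢ → iT` needs a positive literal `xᵢ` with `σ i = true`, and
`iF → xᵢ` lands back in the source side since the negative literal `¬xᵢ` is false. Conversely,
a true literal `xᵢ` gives the path `sprev → xᵢ → iT → snext`, and a true literal `¬xᵢ` gives
`sprev → iF → xᵢ → snext`.
-/

/-- Vertices of the clause gadget: entry `sprev`, exit `snext`, one node per
variable, and the intermediate nodes `iT`, `iF`. -/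
inductive GV (n : ℕ) : Type
  | sprev : GV n
  | snext : GV n
  | var : Fin n → GV n
  | iT : GV n
  | iF : GV n
  deriving DecidableEq

/-- Edges of the clause gadget after applying the assignment-induced cuts:
the through edge `(sprev, var i)` survives iff `σ i = true` (it is cut when
`x_i` is false), the through edge `(var i, snext)` survives iff `σ i = false`
(cut when `x_i` is true); for each positive literal `x_i` of the clause `c`
there are edges `(var i, iT)` and `(iT, snext)`, and for each negative literal
`¬x_i` there are edges `(sprev, iF)` and `(iF, var i)` (literal edges are never
cut). -/
def gadgetEdge {n : ℕ} (c : Finset (Fin n × Bool)) (σ : Fin n → Bool) :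
    GV n → GV n → Prop
  | .sprev, .var i => σ i = true
  | .var i, .snext => σ i = false
  | .var i, .iT => (i, true) ∈ c
  | .iT, .snext => ∃ i, (i, true) ∈ c
  | .sprev, .iF => ∃ i, (i, false) ∈ c
  | .iF, .var i => (i, false) ∈ c
  | _, _ => False

theorem chain_invariant {α : Type*} {r : α → α → Prop} (R : α → Prop)
    (hR : ∀ a b, R a → r a b → R b) {k : ℕ} {p : ℕ → α} (h0 : R (p 0))
    (hp : ∀ i < k, r (p i) (p (i + 1))) : R (p k) := by
  induction k with
  | zero => exact h0
  | succ k ih => exact hR _ _ (ih fun i hi => hp i (by omega)) (hp k k.lt_succ_self)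

theorem exists_chain_of_three {α : Type*} {r : α → α → Prop} {a b c d : α}
    (hab : r a b) (hbc : r b c) (hcd : r c d) :
    ∃ p : ℕ → α, p 0 = a ∧ p 3 = d ∧ ∀ i < 3, r (p i) (p (i + 1)) := by
  refine ⟨fun | 0 => a | 1 => b | 2 => c | _ => d, rfl, rfl, fun i hi => ?_⟩
  interval_cases i <;> assumption

namespace GV

def sourceSide {n : ℕ} (σ : Fin n → Bool) : GV n → Prop
  | .sprev => True
  | .var i => σ i = true
  | _ => False

variable {n : ℕ} {c : Finset (Fin n × Bool)} {σ : Fin n → Bool}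

theorem sourceSide_of_gadgetEdge {a b : GV n} (ha : a.sourceSide σ)
    (hab : gadgetEdge c σ a b) (hT : b ≠ iT) (hF : b ≠ iF) : b.sourceSide σ := by
  cases a <;> cases b <;> simp_all [sourceSide, gadgetEdge]

theorem sourceSide_or_iF_of_gadgetEdge (hc : ∀ l ∈ c, σ l.1 ≠ l.2) {a b : GV n}
    (ha : a.sourceSide σ ∨ a = iF) (hab : gadgetEdge c σ a b) :
    b.sourceSide σ ∨ b = iF := by
  cases a <;> cases b <;> simp_all [sourceSide, gadgetEdge]

variable {k : ℕ} {p : ℕ → GV n}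

theorem exists_iT_or_iF_of_path (h0 : p 0 = sprev) (hk : p k = snext)
    (hp : ∀ i < k, gadgetEdge c σ (p i) (p (i + 1))) : ∃ i ≤ k, p i = iT ∨ p i = iF := by
  by_contra! hTF
  have := chain_invariant (r := fun a b => gadgetEdge c σ a b ∧ b ≠ iT ∧ b ≠ iF)
    (fun v => v.sourceSide σ)
    (fun _ _ ha ⟨hab, hT, hF⟩ => sourceSide_of_gadgetEdge ha hab hT hF)
    (by simp [h0, sourceSide]) (fun i hi => ⟨hp i hi, hTF (i + 1) hi⟩)
  simp [hk, sourceSide] at this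

theorem exists_satisfied_of_path (h0 : p 0 = sprev) (hk : p k = snext)
    (hp : ∀ i < k, gadgetEdge c σ (p i) (p (i + 1))) : ∃ l ∈ c, σ l.1 = l.2 := by
  by_contra! hc
  have := chain_invariant (fun v => v.sourceSide σ ∨ v = iF)
    (fun _ _ => sourceSide_or_iF_of_gadgetEdge hc) (by simp [h0, sourceSide]) hp
  simp [hk, sourceSide] at this

theorem exists_path_of_satisfied {l : Fin n × Bool} (hl : l ∈ c) (hσ : σ l.1 = l.2) :
    ∃ p : ℕ → GV n, p 0 = sprev ∧ p 3 = snext ∧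
      ∀ i < 3, gadgetEdge c σ (p i) (p (i + 1)) := by
  obtain ⟨i, _ | _⟩ := l
  · exact exists_chain_of_three (b := iF) (c := var i) ⟨i, hl⟩ hl hσ
  · exact exists_chain_of_three (b := var i) (c := iT) hσ hl ⟨i, hl⟩

end GV

/-- clause gadget soundness: there exists a path from `sprev` to
`snext` in the cut gadget iff the assignment `σ` satisfies the clause `c`, and
every surviving such path passes through `iT` or `iF`. -/
theorem stmt_8 (n : ℕ) (c : Finset (Fin n × Bool)) (σ : Fin n → Bool) :
    ((∃ (k : ℕ) (p : ℕ → GV n), p 0 = GV.sprev ∧ p k = GV.snext ∧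
        ∀ i < k, gadgetEdge c σ (p i) (p (i + 1))) ↔
      ∃ l ∈ c, σ l.1 = l.2) ∧
    (∀ (k : ℕ) (p : ℕ → GV n), p 0 = GV.sprev → p k = GV.snext →
      (∀ i < k, gadgetEdge c σ (p i) (p (i + 1))) →
      ∃ i ≤ k, p i = GV.iT ∨ p i = GV.iF) :=
  ⟨⟨fun ⟨_, _, h0, hk, hp⟩ => GV.exists_satisfied_of_path h0 hk hp,
    fun ⟨_, hl, hσ⟩ => ⟨3, GV.exists_path_of_satisfied hl hσ⟩⟩,
    fun _ _ => GV.exists_iT_or_iF_of_path⟩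
end

section
/- In the series composition of m clause gadgets (Construction 2) for a 3-SAT formula with n variables, where for each variable all its incoming edges (one per gadget) form one group and all its outgoing edges form another group, and any valid cut must assign a common cut value to all edges in a group while destroying every source-to-target path that avoids all intermediate nodes: any valid set of cut edge-groups has cardinality at least n·m edges, i.e., at least one of the two groups per variable must be fully cut. -/
/-- Vertices of the series composition of `m` clause gadgets over `n` variables:
chain nodes `s 0, …, s m`, variable nodes `v i j` (variable `i` in gadget `j`),
and intermediate nodes `iT j`, `iF j` for each gadget `j`. -/
inductive CV (n m : ℕ) : Type
  | s : Fin (m + 1) → CV n m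
  | v : Fin n → Fin m → CV n m
  | iT : Fin m → CV n m
  | iF : Fin m → CV n m
  deriving DecidableEq

/-- Edges of the composed graph for the 3-SAT formula with clauses `c`:
through edges `(s_{j}, v i j)` and `(v i j, s_{j+1})` for every variable `i` and
gadget `j`; for each positive literal `x_i` of clause `c j`, edges `(v i j, iT j)`
and `(iT j, s_{j+1})`; for each negative literal `¬x_i` of `c j`, edges
`(s_j, iF j)` and `(iF j, v i j)`. -/
def compEdge {n m : ℕ} (c : Fin m → Finset (Fin n × Bool)) :
    CV n m → CV n m → Prop
  | .s j, .v _ j' => j = Fin.castSucc j'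
  | .v _ j, .s j' => j' = Fin.succ j
  | .v i j, .iT j' => j' = j ∧ (i, true) ∈ c j
  | .iT j, .s j' => j' = Fin.succ j ∧ ∃ i, (i, true) ∈ c j
  | .s j, .iF j' => j = Fin.castSucc j' ∧ ∃ i, (i, false) ∈ c j'
  | .iF j, .v i j' => j' = j ∧ (i, false) ∈ c j
  | _, _ => False

/-- A path from the source `s 0` to the target `s m` in the composed graph with
the cut edges `C` removed. -/
def IsCutPath {n m : ℕ} (c : Fin m → Finset (Fin n × Bool))
    (C : Finset (CV n m × CV n m)) (k : ℕ) (p : ℕ → CV n m) : Prop :=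
  p 0 = CV.s 0 ∧ p k = CV.s (Fin.last m) ∧
    ∀ i < k, compEdge c (p i) (p (i + 1)) ∧ (p i, p (i + 1)) ∉ C

/-- A path avoids all intermediate nodes. -/
def AvoidsI {n m : ℕ} (k : ℕ) (p : ℕ → CV n m) : Prop :=
  ∀ i ≤ k, (∀ j, p i ≠ CV.iT j) ∧ ∀ j, p i ≠ CV.iF j

/-- A path visits some intermediate node. -/
def VisitsI {n m : ℕ} (k : ℕ) (p : ℕ → CV n m) : Prop :=
  ∃ i ≤ k, ∃ j, p i = CV.iT j ∨ p i = CV.iF j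

/-- The cut set respects the edge groups: for each variable `i`, all its incoming
edges `(s_j, v i j)` share one cut value, and all its outgoing edges
`(v i j, s_{j+1})` share one cut value. -/
def GroupsRespected {n m : ℕ} (C : Finset (CV n m × CV n m)) : Prop :=
  (∀ i : Fin n, ∀ j j' : Fin m,
    ((CV.s (Fin.castSucc j), CV.v i j) ∈ C ↔ (CV.s (Fin.castSucc j'), CV.v i j') ∈ C)) ∧
  (∀ i : Fin n, ∀ j j' : Fin m,
    ((CV.v i j, CV.s (Fin.succ j)) ∈ C ↔ (CV.v i j', CV.s (Fin.succ j')) ∈ C))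

/-- Only the grouped through edges (not the edges incident to intermediates) may be cut. -/
def OnlyThrough {n m : ℕ} (C : Finset (CV n m × CV n m)) : Prop :=
  ∀ e ∈ C, (∃ i j, e = (CV.s (Fin.castSucc j), CV.v i j)) ∨
    (∃ i j, e = (CV.v i j, CV.s (Fin.succ j)))

/-- All bypass paths (source-to-target paths avoiding every intermediate node)
are destroyed by the cuts. -/
def NoBypass {n m : ℕ} (c : Fin m → Finset (Fin n × Bool))
    (C : Finset (CV n m × CV n m)) : Prop :=
  ¬ ∃ (k : ℕ) (p : ℕ → CV n m), IsCutPath c C k p ∧ AvoidsI k p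

/-! For each variable `x_i`, the path `s₀ → v i 0 → s₁ → ⋯ → v i (m-1) → s_m` avoids every
intermediate node, so one of its edges is cut; by the group constraint the whole group of that
edge is cut. The groups of distinct variables are disjoint, so at least `n·m` edges are cut. -/

def bypassPath {n : ℕ} (m : ℕ) (i : Fin n) (t : ℕ) : CV n m :=
  if h : t / 2 < m then
    if t % 2 = 0 then .s (Fin.castSucc ⟨t / 2, h⟩) else .v i ⟨t / 2, h⟩
  else .s (Fin.last m)

section bypassPath

variable {n m : ℕ} (i : Fin n)

lemma bypassPath_two_mul {q : ℕ} (hq : q ≤ m) :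
    bypassPath m i (2 * q) = .s ⟨q, Nat.lt_succ_of_le hq⟩ := by
  unfold bypassPath
  split_ifs
  · simp
  · omega
  · simp [Fin.last, show q = m by omega]

lemma bypassPath_two_mul_add_one (j : Fin m) : bypassPath m i (2 * j + 1) = .v i j := by
  have h : (2 * (j : ℕ) + 1) / 2 = j := by omega
  simp [bypassPath, h]

lemma avoidsI_bypassPath (k : ℕ) : AvoidsI k (bypassPath m i) := by
  intro t _
  unfold bypassPath
  split_ifs <;> simp

lemma isCutPath_bypassPath (c : Fin m → Finset (Fin n × Bool)) (C : Finset (CV n m × CV n m))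
    (hin : ∀ j, (CV.s (Fin.castSucc j), CV.v i j) ∉ C)
    (hout : ∀ j, (CV.v i j, CV.s (Fin.succ j)) ∉ C) :
    IsCutPath c C (2 * m) (bypassPath m i) := by
  refine ⟨bypassPath_two_mul i (Nat.zero_le m), bypassPath_two_mul i le_rfl, fun t ht => ?_⟩
  obtain ⟨q, rfl | rfl⟩ := Nat.even_or_odd' t
  · have hq : q < m := by omega
    rw [bypassPath_two_mul i hq.le, bypassPath_two_mul_add_one i ⟨q, hq⟩]
    exact ⟨rfl, hin ⟨q, hq⟩⟩
  · have hq : q < m := by omega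
    rw [bypassPath_two_mul_add_one i ⟨q, hq⟩, show 2 * q + 1 + 1 = 2 * (q + 1) by ring,
      bypassPath_two_mul i hq]
    exact ⟨rfl, hout ⟨q, hq⟩⟩

end bypassPath

lemma group_cut_of_noBypass {n m : ℕ} {c : Fin m → Finset (Fin n × Bool)}
    {C : Finset (CV n m × CV n m)} (hgrp : GroupsRespected C) (hbyp : NoBypass c C)
    (i : Fin n) :
    (∀ j : Fin m, (CV.s (Fin.castSucc j), CV.v i j) ∈ C) ∨
      (∀ j : Fin m, (CV.v i j, CV.s (Fin.succ j)) ∈ C) := by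
  by_contra! ⟨⟨j₀, hin⟩, ⟨j₁, hout⟩⟩
  exact hbyp ⟨2 * m, bypassPath m i,
    isCutPath_bypassPath i c C (fun j h => hin ((hgrp.1 i j j₀).mp h))
      (fun j h => hout ((hgrp.2 i j j₁).mp h)),
    avoidsI_bypassPath i _⟩

lemma mul_le_card_of_group_cut {n m : ℕ} (C : Finset (CV n m × CV n m))
    (hcut : ∀ i : Fin n, (∀ j : Fin m, (CV.s (Fin.castSucc j), CV.v i j) ∈ C) ∨
      (∀ j : Fin m, (CV.v i j, CV.s (Fin.succ j)) ∈ C)) :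
    n * m ≤ C.card := by
  classical
  let cutEdge : Fin n × Fin m → CV n m × CV n m := fun ⟨i, j⟩ =>
    if ∀ j : Fin m, (CV.s (Fin.castSucc j), CV.v i j) ∈ C then (CV.s (Fin.castSucc j), CV.v i j)
    else (CV.v i j, CV.s (Fin.succ j))
  have hmaps : ∀ ij ∈ (Finset.univ : Finset (Fin n × Fin m)), cutEdge ij ∈ C := by
    rintro ⟨i, j⟩ -
    by_cases hi : ∀ j : Fin m, (CV.s (Fin.castSucc j), CV.v i j) ∈ C
    · simp [cutEdge, hi]
    · simpa [cutEdge, hi] using (hcut i).resolve_left hi j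
  have hinj : Set.InjOn cutEdge (Finset.univ : Finset (Fin n × Fin m)) := by
    rintro ⟨i, j⟩ - ⟨i', j'⟩ - h
    simp only [cutEdge] at h
    split_ifs at h <;> simp_all
  simpa using Finset.card_le_card_of_injOn cutEdge hmaps hinj

theorem stmt_9_general (n m : ℕ) (c : Fin m → Finset (Fin n × Bool))
    (C : Finset (CV n m × CV n m))
    (hgrp : GroupsRespected C) (hbyp : NoBypass c C) :
    n * m ≤ C.card ∧
    ∀ i : Fin n, (∀ j : Fin m, (CV.s (Fin.castSucc j), CV.v i j) ∈ C) ∨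
      (∀ j : Fin m, (CV.v i j, CV.s (Fin.succ j)) ∈ C) :=
  ⟨mul_le_card_of_group_cut C (group_cut_of_noBypass hgrp hbyp),
    group_cut_of_noBypass hgrp hbyp⟩

/-- lower bound: any valid cut set (respecting the groups, cutting
only grouped through edges, and destroying every bypass path) has cardinality at
least `n·m`; indeed for each variable at least one of its two groups must be
fully cut. -/
theorem stmt_9 (n m : ℕ) (c : Fin m → Finset (Fin n × Bool))
    (C : Finset (CV n m × CV n m))
    (hgrp : GroupsRespected C) (hthr : OnlyThrough C) (hbyp : NoBypass c C) :
    n * m ≤ C.card ∧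
    ∀ i : Fin n, (∀ j : Fin m, (CV.s (Fin.castSucc j), CV.v i j) ∈ C) ∨
      (∀ j : Fin m, (CV.v i j, CV.s (Fin.succ j)) ∈ C) :=
  stmt_9_general n m c C hgrp hbyp
end

section
/- Soundness of the reduction: for the composed 3-SAT graph of Construction 2, if there exists a valid set of edge cuts of cardinality at most n·m (respecting the groups, destroying all bypass paths, and leaving at least one S-to-T path), then the induced Boolean assignment (x_i true iff its outgoing group is cut) satisfies the 3-SAT formula. -/
/-- A level function on the vertices, strictly increasing along edges. -/
def fc {n m : ℕ} : CV n m → ℕ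
  | .s j => 4 * j.val
  | .v _ j => 4 * j.val + 2
  | .iT j => 4 * j.val + 3
  | .iF j => 4 * j.val + 1

lemma fc_cross {n m : ℕ} {c : Fin m → Finset (Fin n × Bool)} {a b : CV n m}
    (h : compEdge c a b) :
    fc a < fc b ∧ ∀ J, fc a < 4 * J → 4 * J ≤ fc b → fc b = 4 * J := by
  cases a with
  | s j =>
    cases b with
    | s j' => exact h.elim
    | v i j' =>
      simp only [compEdge] at h; subst h
      simp only [fc, Fin.coe_castSucc]
      exact ⟨by omega, fun J h1 h2 => by omega⟩
    | iT j' => exact h.elim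
    | iF j' =>
      simp only [compEdge] at h; obtain ⟨h1, -⟩ := h; subst h1
      simp only [fc, Fin.coe_castSucc]
      exact ⟨by omega, fun J h1 h2 => by omega⟩
  | v i j =>
    cases b with
    | s j' =>
      simp only [compEdge] at h; subst h
      simp only [fc, Fin.val_succ]
      exact ⟨by omega, fun J h1 h2 => by omega⟩
    | v i' j' => exact h.elim
    | iT j' =>
      simp only [compEdge] at h; obtain ⟨h1, -⟩ := h; subst h1
      simp only [fc]
      exact ⟨by omega, fun J h1 h2 => by omega⟩
    | iF j' => exact h.elim
  | iT j =>
    cases b with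
    | s j' =>
      simp only [compEdge] at h; obtain ⟨h1, -⟩ := h; subst h1
      simp only [fc, Fin.val_succ]
      exact ⟨by omega, fun J h1 h2 => by omega⟩
    | v i' j' => exact h.elim
    | iT j' => exact h.elim
    | iF j' => exact h.elim
  | iF j =>
    cases b with
    | s j' => exact h.elim
    | v i' j' =>
      simp only [compEdge] at h; obtain ⟨h1, -⟩ := h; subst h1
      simp only [fc]
      exact ⟨by omega, fun J h1 h2 => by omega⟩
    | iT j' => exact h.elim
    | iF j' => exact h.elim

lemma fc_eq_s {n m : ℕ} {x : CV n m} {J : ℕ} (hJ : J ≤ m) (h : fc x = 4 * J) :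
    x = CV.s ⟨J, Nat.lt_succ_of_le hJ⟩ := by
  cases x with
  | s jj =>
    simp only [fc] at h
    exact congrArg CV.s (Fin.ext (by simp only [Fin.val_mk]; omega))
  | v i jj => simp only [fc] at h; omega
  | iT jj => simp only [fc] at h; omega
  | iF jj => simp only [fc] at h; omega

lemma path_mono {n m : ℕ} {c : Fin m → Finset (Fin n × Bool)}
    {C : Finset (CV n m × CV n m)} {k : ℕ} {p : ℕ → CV n m}
    (hp : IsCutPath c C k p) :
    ∀ a b, a < b → b ≤ k → fc (p a) < fc (p b) := by
  intro a b hab hbk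
  induction b with
  | zero => omega
  | succ b ih =>
    have hstep := (hp.2.2 b (by omega)).1
    rcases Nat.lt_or_ge a b with h' | h'
    · exact lt_trans (ih h' (by omega)) (fc_cross hstep).1
    · have : a = b := by omega
      subst this
      exact (fc_cross hstep).1

lemma path_visit {n m : ℕ} {c : Fin m → Finset (Fin n × Bool)}
    {C : Finset (CV n m × CV n m)} {k : ℕ} {p : ℕ → CV n m}
    (hp : IsCutPath c C k p) {J : ℕ} (hJ : J ≤ m) :
    ∃ t ≤ k, p t = CV.s ⟨J, Nat.lt_succ_of_le hJ⟩ := by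
  classical
  have hex : ∃ t, t ≤ k ∧ 4 * J ≤ fc (p t) := by
    refine ⟨k, le_refl _, ?_⟩
    rw [hp.2.1]
    simp only [fc, Fin.val_last]
    omega
  obtain ⟨htk, htf⟩ := Nat.find_spec hex
  refine ⟨Nat.find hex, htk, ?_⟩
  cases hfind : Nat.find hex with
  | zero =>
    have h1 : fc (p 0) = 0 := by rw [hp.1]; simp [fc]
    have hJ0 : J = 0 := by rw [hfind] at htf; omega
    subst hJ0
    exact fc_eq_s hJ (by rw [h1])
  | succ t' =>
    rw [hfind] at htf htk
    have hmin := Nat.find_min hex (m := t') (by omega)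
    push_neg at hmin
    have ht'f : fc (p t') < 4 * J := hmin (by omega)
    have hstep := (hp.2.2 t' (by omega)).1
    exact fc_eq_s hJ ((fc_cross hstep).2 J ht'f htf)

/-- soundness of the reduction: if there is a valid cut set of
cardinality at most `n·m` (respecting the groups, cutting only grouped edges,
destroying all bypass paths, and leaving some source-to-target path), then the
induced Boolean assignment (`x_i` true iff its outgoing group is cut) satisfies
the 3-SAT formula. -/
theorem stmt_11 (n m : ℕ) (c : Fin m → Finset (Fin n × Bool))
    (C : Finset (CV n m × CV n m))
    (hgrp : GroupsRespected C) (hthr : OnlyThrough C) (hbyp : NoBypass c C)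
    (hpath : ∃ (k : ℕ) (p : ℕ → CV n m), IsCutPath c C k p)
    (hcard : C.card ≤ n * m) :
    ∀ j : Fin m, ∃ l ∈ c j,
      ((∀ j' : Fin m, (CV.v l.1 j', CV.s (Fin.succ j')) ∈ C) ↔ l.2 = true) := by
  classical
  intro j
  obtain ⟨k, p, hp⟩ := hpath
  have hm : 0 < m := j.pos
  -- Every variable has at least one of its groups fully cut, else a bypass survives.
  have hIO : ∀ i : Fin n,
      (∀ j' : Fin m, (CV.s (Fin.castSucc j'), CV.v i j') ∈ C) ∨
      (∀ j' : Fin m, (CV.v i j', CV.s (Fin.succ j')) ∈ C) := by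
    intro i
    by_contra hcon
    push_neg at hcon
    obtain ⟨⟨j1, hj1⟩, ⟨j2, hj2⟩⟩ := hcon
    have hin : ∀ j' : Fin m, (CV.s (Fin.castSucc j'), CV.v i j') ∉ C :=
      fun j' h => hj1 ((hgrp.1 i j' j1).mp h)
    have hout : ∀ j' : Fin m, (CV.v i j', CV.s (Fin.succ j')) ∉ C :=
      fun j' h => hj2 ((hgrp.2 i j' j2).mp h)
    apply hbyp
    set q : ℕ → CV n m := fun t =>
      if ht : t / 2 < m then
        (if t % 2 = 0 then CV.s (Fin.castSucc ⟨t / 2, ht⟩) else CV.v i ⟨t / 2, ht⟩)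
      else CV.s (Fin.last m) with hqd
    have qeven : ∀ a (ha : a < m), q (2 * a) = CV.s (Fin.castSucc ⟨a, ha⟩) := by
      intro a ha
      have h1 : 2 * a / 2 = a := by omega
      have h2 : 2 * a % 2 = 0 := by omega
      simp only [hqd, h1, h2, dif_pos ha, if_pos]
    have qodd : ∀ a (ha : a < m), q (2 * a + 1) = CV.v i ⟨a, ha⟩ := by
      intro a ha
      have h1 : (2 * a + 1) / 2 = a := by omega
      have h2 : (2 * a + 1) % 2 = 1 := by omega
      simp only [hqd, h1, h2, dif_pos ha]
      norm_num
    have qend : q (2 * m) = CV.s (Fin.last m) := by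
      have h1 : 2 * m / 2 = m := by omega
      simp only [hqd, h1, dif_neg (lt_irrefl m)]
    refine ⟨2 * m, q, ⟨?_, ?_, ?_⟩, ?_⟩
    · show q 0 = CV.s 0
      rw [show q 0 = q (2 * 0) from rfl, qeven 0 hm]
      exact congrArg CV.s (Fin.ext (by simp))
    · exact qend
    · intro t ht
      rcases Nat.even_or_odd t with ⟨a, ha⟩ | ⟨a, ha⟩
      · obtain rfl : t = 2 * a := by omega
        have ha' : a < m := by omega
        rw [qeven a ha', qodd a ha']
        exact ⟨rfl, hin _⟩
      · obtain rfl : t = 2 * a + 1 := by omega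
        have ha' : a < m := by omega
        rw [qodd a ha', show 2 * a + 1 + 1 = 2 * (a + 1) from by ring]
        by_cases ham : a + 1 < m
        · rw [qeven (a + 1) ham,
            show Fin.castSucc (⟨a + 1, ham⟩ : Fin m) = Fin.succ ⟨a, ha'⟩ from
              Fin.ext (by simp)]
          exact ⟨rfl, hout _⟩
        · have hem : a + 1 = m := by omega
          rw [show 2 * (a + 1) = 2 * m from by omega, qend,
            show Fin.last m = Fin.succ ⟨a, ha'⟩ from Fin.ext (by simp [hem])]
          exact ⟨rfl, hout _⟩
    · intro t _
      constructor <;> intro jj <;> simp only [hqd] <;> split_ifs <;> simp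
  -- The surviving path visits `s (castSucc j)`.
  obtain ⟨t, htk, hpt0⟩ := path_visit hp (le_of_lt j.isLt)
  have hpt : p t = CV.s (Fin.castSucc j) := by
    rw [hpt0]; exact congrArg CV.s (Fin.ext rfl)
  have hfk : fc (p k) = 4 * m := by rw [hp.2.1]; simp [fc]
  have hlt : ∀ u, u ≤ k → fc (p u) < 4 * m → u < k := by
    intro u hu hf
    rcases lt_or_eq_of_le hu with h | h
    · exact h
    · rw [h, hfk] at hf; omega
  have htlt : t < k := by
    apply hlt t htk
    rw [hpt]
    simp only [fc, Fin.coe_castSucc]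
    have := j.isLt; omega
  have step1 := hp.2.2 t htlt
  rw [hpt] at step1
  cases hq1 : p (t + 1) with
  | s j1 => rw [hq1] at step1; exact (step1.1 : False).elim
  | iT j1 => rw [hq1] at step1; exact (step1.1 : False).elim
  | v i1 j1 =>
    rw [hq1] at step1
    have hj1 : j1 = j :=
      (Fin.castSucc_injective m (step1.1 : Fin.castSucc j = Fin.castSucc j1)).symm
    subst j1
    have ht1k : t + 1 < k := by
      apply hlt _ (by omega)
      rw [hq1]; simp only [fc]; have := j.isLt; omega
    have step2 := hp.2.2 (t + 1) ht1k
    rw [hq1, show t + 1 + 1 = t + 2 from rfl] at step2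
    cases hq2 : p (t + 2) with
    | s j2 =>
      rw [hq2] at step2
      have hj2 : j2 = Fin.succ j := (step2.1 : j2 = Fin.succ j)
      subst hj2
      rcases hIO i1 with h | h
      · exact absurd (h j) step1.2
      · exact absurd (h j) step2.2
    | iT j2 =>
      rw [hq2] at step2
      obtain ⟨-, hmem⟩ := (step2.1 : j2 = j ∧ (i1, true) ∈ c j)
      refine ⟨(i1, true), hmem, ?_⟩
      rcases hIO i1 with h | h
      · exact absurd (h j) step1.2
      · simpa using h
    | v i2 j2 => rw [hq2] at step2; exact (step2.1 : False).elim
    | iF j2 => rw [hq2] at step2; exact (step2.1 : False).elim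
  | iF j1 =>
    rw [hq1] at step1
    obtain ⟨hj1, -⟩ :=
      (step1.1 : Fin.castSucc j = Fin.castSucc j1 ∧ ∃ i, (i, false) ∈ c j1)
    have hj1' : j1 = j := (Fin.castSucc_injective m hj1).symm
    subst j1
    have ht1k : t + 1 < k := by
      apply hlt _ (by omega)
      rw [hq1]; simp only [fc]; have := j.isLt; omega
    have step2 := hp.2.2 (t + 1) ht1k
    rw [hq1, show t + 1 + 1 = t + 2 from rfl] at step2
    cases hq2 : p (t + 2) with
    | s j2 => rw [hq2] at step2; exact (step2.1 : False).elim
    | iT j2 => rw [hq2] at step2; exact (step2.1 : False).elim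
    | iF j2 => rw [hq2] at step2; exact (step2.1 : False).elim
    | v i2 j2 =>
      rw [hq2] at step2
      obtain ⟨hj2, hmemF⟩ := (step2.1 : j2 = j ∧ (i2, false) ∈ c j)
      subst j2
      have ht2k : t + 2 < k := by
        apply hlt _ (by omega)
        rw [hq2]; simp only [fc]; have := j.isLt; omega
      have step3 := hp.2.2 (t + 2) ht2k
      rw [hq2, show t + 2 + 1 = t + 3 from rfl] at step3
      cases hq3 : p (t + 3) with
      | v i3 j3 => rw [hq3] at step3; exact (step3.1 : False).elim
      | iF j3 => rw [hq3] at step3; exact (step3.1 : False).elim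
      | s j3 =>
        rw [hq3] at step3
        have hj3 : j3 = Fin.succ j := (step3.1 : j3 = Fin.succ j)
        subst hj3
        refine ⟨(i2, false), hmemF, ?_⟩
        simp only [Bool.false_eq_true, iff_false, not_forall]
        exact ⟨j, step3.2⟩
      | iT j3 =>
        rw [hq3] at step3
        obtain ⟨-, hmemT⟩ := (step3.1 : j3 = j ∧ (i2, true) ∈ c j)
        by_cases hOut : ∀ j' : Fin m, (CV.v i2 j', CV.s (Fin.succ j')) ∈ C
        · exact ⟨(i2, true), hmemT, by simpa using hOut⟩
        · refine ⟨(i2, false), hmemF, ?_⟩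
          simpa using hOut
end
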